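/- arXiv:0711.3365 — 3 statements merged into one kernel-verified Lean document; each statement's English description precedes it below -/
import Mathlib

section
/- Let h be a nonzero polynomial over ℂ in n variables with h(0)=0, and let τ be a face of Δ_0(h). Then for every k ∈ ℕ^n with F(h)(k) = τ one has ν(k) ≥ σ(h)·(N(h)(k) + 1) − σ(h_τ). -/
open scoped Classical Pointwise BigOperators

noncomputable section

/-- The Newton polyhedron of `f` at the origin: the Minkowski sum of the convex hull
of the support of `f` with the nonnegative orthant. -/
def newtonPolyhedron {R : Type} [CommRing R] {n : ℕ} (f : MvPolynomial (Fin n) R) :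
    Set (Fin n → ℝ) :=
  convexHull ℝ {v : Fin n → ℝ | ∃ i ∈ f.support, v = fun j => ((i j : ℕ) : ℝ)} +
    {v : Fin n → ℝ | ∀ j, 0 ≤ v j}

/-- `1/σ(f)` is the first parameter at which the diagonal meets the Newton polyhedron. -/
def sigmaNP {R : Type} [CommRing R] {n : ℕ} (f : MvPolynomial (Fin n) R) : ℝ :=
  (sInf {t : ℝ | 0 ≤ t ∧ (fun _ => t) ∈ newtonPolyhedron f})⁻¹

/-- `τ` is a face of `Δ`: either `Δ` itself or a nonempty set of the form
`{x ∈ Δ | L x = 0}` for an affine function `L` which is nonnegative on `Δ`. -/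
def IsFaceOf {n : ℕ} (Δ τ : Set (Fin n → ℝ)) : Prop :=
  τ = Δ ∨ (τ.Nonempty ∧ ∃ (b0 : ℝ) (b : Fin n → ℝ),
    (∀ x ∈ Δ, 0 ≤ b0 + ∑ j, b j * x j) ∧ τ = {x ∈ Δ | b0 + ∑ j, b j * x j = 0})

/-- `f_I`: the subsum of the monomials of `f` whose exponent lies in `I`. -/
def faceRestrict {R : Type} [CommRing R] {n : ℕ} (f : MvPolynomial (Fin n) R)
    (I : Set (Fin n → ℝ)) : MvPolynomial (Fin n) R :=
  ∑ i ∈ f.support.filter (fun i => (fun j => ((i j : ℕ) : ℝ)) ∈ I),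
    MvPolynomial.monomial i (MvPolynomial.coeff i f)

/-- `F_0(f)`: the smallest face of the Newton polyhedron meeting the diagonal. -/
def minimalDiagonalFace {R : Type} [CommRing R] {n : ℕ} (f : MvPolynomial (Fin n) R) :
    Set (Fin n → ℝ) :=
  ⋂₀ {τ : Set (Fin n → ℝ) | IsFaceOf (newtonPolyhedron f) τ ∧ ∃ t : ℝ, (fun _ => t) ∈ τ}

/-- `κ(f)`: the codimension in `ℝ^n` of the smallest face of the Newton polyhedron
meeting the diagonal. -/
def kappaNP {R : Type} [CommRing R] {n : ℕ} (f : MvPolynomial (Fin n) R) : ℕ :=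
  n - Module.finrank ℝ (affineSpan ℝ (minimalDiagonalFace f)).direction

/-- `ν(k) = k₁ + ⋯ + kₙ`. -/
def nuSum {n : ℕ} (k : Fin n → ℕ) : ℕ := ∑ j, k j

/-- `N(f)(k) = min { k·i : i ∈ Δ₀(f) }`. -/
def NofK {R : Type} [CommRing R] {n : ℕ} (f : MvPolynomial (Fin n) R) (k : Fin n → ℕ) : ℝ :=
  sInf {r : ℝ | ∃ v ∈ newtonPolyhedron f, r = ∑ j, (k j : ℝ) * v j}

/-- `F(f)(k) = { i ∈ Δ₀(f) : k·i = N(f)(k) }`. -/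
def FofK {R : Type} [CommRing R] {n : ℕ} (f : MvPolynomial (Fin n) R) (k : Fin n → ℕ) :
    Set (Fin n → ℝ) :=
  {v ∈ newtonPolyhedron f | ∑ j, (k j : ℝ) * v j = NofK f k}

/-- `f` is quasi-homogeneous: for some positive integers `a i`, the polynomial
`f (x₁ ^ a₁, …, xₙ ^ aₙ)` is homogeneous. -/
def IsQuasiHomogeneous {R : Type} [CommRing R] {n : ℕ} (f : MvPolynomial (Fin n) R) : Prop :=
  ∃ a : Fin n → ℕ, (∀ j, 0 < a j) ∧
    ∃ d, (MvPolynomial.bind₁ (fun j => MvPolynomial.X j ^ a j) f).IsHomogeneous d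

/-- A complex polynomial has no critical point with all coordinates nonzero. -/
def NoCritOnTorus {n : ℕ} (h : MvPolynomial (Fin n) ℂ) : Prop :=
  ¬ ∃ x : Fin n → ℂ, (∀ j, x j ≠ 0) ∧ ∀ j, MvPolynomial.eval x (MvPolynomial.pderiv j h) = 0

/-- A complex polynomial is nondegenerate w.r.t. its Newton polyhedron at the origin:
for every compact face `τ`, the polynomial `f_τ` has no critical point on the torus. -/
def NondegenerateC {n : ℕ} (f : MvPolynomial (Fin n) ℂ) : Prop :=
  ∀ τ : Set (Fin n → ℝ), IsFaceOf (newtonPolyhedron f) τ → IsCompact τ →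
    NoCritOnTorus (faceRestrict f τ)

/-- An integer polynomial is nondegenerate w.r.t. its Newton polyhedron at the origin
(with coefficients viewed in `ℂ`). -/
def NondegenerateZ {n : ℕ} (f : MvPolynomial (Fin n) ℤ) : Prop :=
  ∀ τ : Set (Fin n → ℝ), IsFaceOf (newtonPolyhedron f) τ → IsCompact τ →
    NoCritOnTorus ((faceRestrict f τ).map (Int.castRingHom ℂ))

/-- The exponential sum `S_f(1/p^m) = p^{-mn} ∑_{x ∈ {0,…,p^m-1}^n} exp(2πi f(x)/p^m)`. -/
def Ssum {n : ℕ} (f : MvPolynomial (Fin n) ℤ) (p m : ℕ) : ℂ :=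
  ((p : ℂ) ^ (m * n))⁻¹ *
    ∑ x : Fin n → Fin (p ^ m),
      Complex.exp (2 * (Real.pi : ℂ) * Complex.I *
        (MvPolynomial.aeval (fun j => ((x j : ℕ) : ℂ)) f / (p : ℂ) ^ m))

/-- The local exponential sum
`T_g(1/p^m) = p^{-mn} ∑_{x ∈ {p,2p,…,p^{m-1}·p}^n} exp(2πi g(x)/p^m)`. -/
def Tsum {n : ℕ} (g : MvPolynomial (Fin n) ℤ) (p m : ℕ) : ℂ :=
  ((p : ℂ) ^ (m * n))⁻¹ *
    ∑ x : Fin n → Fin (p ^ (m - 1)),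
      Complex.exp (2 * (Real.pi : ℂ) * Complex.I *
        (MvPolynomial.aeval (fun j => ((p * ((x j : ℕ) + 1) : ℕ) : ℂ)) g / (p : ℂ) ^ m))

/-- `A(p,m,τ) = ∑_{k ∈ ℕ^n, F(f)(k) = τ, N(f)(k) ≥ m} p^{-ν(k)}`. -/
def Aterm {R : Type} [CommRing R] {n : ℕ} (f : MvPolynomial (Fin n) R) (p m : ℕ)
    (τ : Set (Fin n → ℝ)) : ℝ :=
  ∑' k : {k : Fin n → ℕ // FofK f k = τ ∧ (m : ℝ) ≤ NofK f k}, ((p : ℝ) ^ nuSum k.1)⁻¹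

/-- `B(p,m,τ) = ∑_{k ∈ ℕ^n, F(f)(k) = τ, N(f)(k) = m-1} p^{-ν(k)}`. -/
def Bterm {R : Type} [CommRing R] {n : ℕ} (f : MvPolynomial (Fin n) R) (p m : ℕ)
    (τ : Set (Fin n → ℝ)) : ℝ :=
  ∑' k : {k : Fin n → ℕ // FofK f k = τ ∧ NofK f k = (m : ℝ) - 1}, ((p : ℝ) ^ nuSum k.1)⁻¹

/-- `E(p,τ) = (p-1)^{-n} ∑_{x ∈ {1,…,p-1}^n} exp(2πi f_τ(x)/p)`. -/
def Eterm {n : ℕ} (f : MvPolynomial (Fin n) ℤ) (p : ℕ) (τ : Set (Fin n → ℝ)) : ℂ :=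
  (((p : ℂ) - 1) ^ n)⁻¹ *
    ∑ x : Fin n → Fin (p - 1),
      Complex.exp (2 * (Real.pi : ℂ) * Complex.I *
        (MvPolynomial.aeval (fun j => (((x j : ℕ) + 1 : ℕ) : ℂ)) (faceRestrict f τ) / (p : ℂ)))

/-! Write the diagonal point `(t₀, …, t₀)`, `t₀ = 1/σ(h)`, as a convex combination `∑ wᵢ i` of
support exponents plus a nonnegative vector. Every exponent has `k·i ≥ N(h)(k)`, with
`k·i ≥ N(h)(k) + 1` off the face `τ = F(h)(k)` by integrality; so if `λ` is the weight carried
by `τ`, then `t₀ ν(k) ≥ N(h)(k) + 1 - λ`. The renormalised `τ`-part of the combination lies in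
the convex hull of the support of `h_τ` and below `(t₀/λ, …, t₀/λ)`, so `1/σ(h_τ) ≤ t₀/λ`,
i.e. `λ ≤ t₀ σ(h_τ)`. -/

open Finset

section NewtonPolyhedron

variable {R : Type} [CommRing R] {n : ℕ}

lemma exponent_injective :
    Function.Injective fun (i : Fin n →₀ ℕ) (j : Fin n) => ((i j : ℕ) : ℝ) :=
  fun _ _ hij => Finsupp.ext fun j => Nat.cast_injective (congrFun hij j)

lemma one_le_sum_exponent {i : Fin n →₀ ℕ} (hi : i ≠ 0) : (1 : ℝ) ≤ ∑ j, ((i j : ℕ) : ℝ) := by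
  obtain ⟨j, hj⟩ := Finsupp.ne_iff.1 hi
  calc (1 : ℝ) ≤ ((i j : ℕ) : ℝ) := by exact_mod_cast Nat.one_le_iff_ne_zero.2 hj
    _ ≤ ∑ j, ((i j : ℕ) : ℝ) :=
      single_le_sum (f := fun j => ((i j : ℕ) : ℝ)) (fun _ _ => by positivity) (mem_univ j)

lemma mem_newtonPolyhedron_of_mem_support {f : MvPolynomial (Fin n) R} {i : Fin n →₀ ℕ}
    (hi : i ∈ f.support) : (fun j => ((i j : ℕ) : ℝ)) ∈ newtonPolyhedron f :=
  ⟨_, subset_convexHull ℝ _ ⟨i, hi, rfl⟩, 0, fun _ => le_rfl, add_zero _⟩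

lemma mem_newtonPolyhedron_of_le {f : MvPolynomial (Fin n) R} {v w : Fin n → ℝ}
    (hv : v ∈ newtonPolyhedron f) (hvw : v ≤ w) : w ∈ newtonPolyhedron f := by
  obtain ⟨a, ha, b, hb, rfl⟩ := Set.mem_add.1 hv
  refine ⟨a, ha, w - a, fun j => ?_, add_sub_cancel _ _⟩
  have hj : a j + b j ≤ w j := hvw j
  have hbj : 0 ≤ b j := hb j
  simp only [Pi.sub_apply]
  linarith

lemma diag_mem_newtonPolyhedron_of_mem_support {f : MvPolynomial (Fin n) R}
    {i : Fin n →₀ ℕ} (hi : i ∈ f.support) :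
    (fun _ => ∑ j, ((i j : ℕ) : ℝ)) ∈ newtonPolyhedron f :=
  mem_newtonPolyhedron_of_le (mem_newtonPolyhedron_of_mem_support hi) fun j =>
    single_le_sum (f := fun j => ((i j : ℕ) : ℝ)) (fun _ _ => by positivity) (mem_univ j)

lemma isClosed_newtonPolyhedron (f : MvPolynomial (Fin n) R) :
    IsClosed (newtonPolyhedron f) := by
  have hfin : {v : Fin n → ℝ | ∃ i ∈ f.support, v = fun j => ((i j : ℕ) : ℝ)}.Finite := by
    convert f.support.finite_toSet.image fun (i : Fin n →₀ ℕ) (j : Fin n) => ((i j : ℕ) : ℝ)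
    ext v
    simp [eq_comm]
  have horthant : IsClosed {v : Fin n → ℝ | ∀ j, 0 ≤ v j} := by
    simpa only [Set.ofPred_forall] using isClosed_iInter fun j => isClosed_le continuous_const
      (continuous_apply j)
  exact horthant.add_left_of_isCompact (hfin.isCompact_convexHull ℝ)

lemma le_sum_mul_of_mem_newtonPolyhedron {f : MvPolynomial (Fin n) R} {κ : Fin n → ℝ}
    (hκ : ∀ j, 0 ≤ κ j) {c : ℝ} (hc : ∀ i ∈ f.support, c ≤ ∑ j, κ j * ((i j : ℕ) : ℝ))
    {v : Fin n → ℝ} (hv : v ∈ newtonPolyhedron f) : c ≤ ∑ j, κ j * v j := by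
  obtain ⟨a, ha, b, hb, rfl⟩ := Set.mem_add.1 hv
  have hlin : IsLinearMap ℝ fun x : Fin n → ℝ => ∑ j, κ j * x j :=
    ⟨fun x y => by simp only [Pi.add_apply, mul_add, sum_add_distrib],
      fun r x => by simp only [Pi.smul_apply, smul_eq_mul, mul_sum, mul_left_comm]⟩
  have ha' : c ≤ ∑ j, κ j * a j :=
    convexHull_min (by rintro _ ⟨i, hi, rfl⟩; exact hc i hi) (convex_halfSpace_ge hlin c) ha
  have hb' : 0 ≤ ∑ j, κ j * b j := sum_nonneg fun j _ => mul_nonneg (hκ j) (hb j)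
  simpa only [Pi.add_apply, mul_add, sum_add_distrib] using le_add_of_le_of_nonneg ha' hb'

lemma exists_weights_of_mem_newtonPolyhedron {f : MvPolynomial (Fin n) R} {v : Fin n → ℝ}
    (hv : v ∈ newtonPolyhedron f) :
    ∃ w : (Fin n →₀ ℕ) → ℝ, (∀ i ∈ f.support, 0 ≤ w i) ∧ ∑ i ∈ f.support, w i = 1 ∧
      ∀ j, ∑ i ∈ f.support, w i * ((i j : ℕ) : ℝ) ≤ v j := by
  obtain ⟨a, ha, b, hb, rfl⟩ := Set.mem_add.1 hv
  have hset : {v : Fin n → ℝ | ∃ i ∈ f.support, v = fun j => ((i j : ℕ) : ℝ)} =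
      ↑(f.support.image fun (i : Fin n →₀ ℕ) (j : Fin n) => ((i j : ℕ) : ℝ)) := by
    ext; simp [eq_comm]
  rw [hset, Finset.mem_convexHull'] at ha
  obtain ⟨w, hw0, hw1, rfl⟩ := ha
  refine ⟨fun i => w fun j => ((i j : ℕ) : ℝ), fun i hi => hw0 _ (mem_image_of_mem _ hi),
    by rwa [sum_image fun _ _ _ _ h => exponent_injective h] at hw1, fun j => ?_⟩
  rw [Pi.add_apply, sum_image fun _ _ _ _ h => exponent_injective h, Finset.sum_apply]
  simpa only [Pi.smul_apply, smul_eq_mul] using le_add_of_nonneg_right (hb j)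

end NewtonPolyhedron

section Sigma

variable {R : Type} [CommRing R] {n : ℕ} {f : MvPolynomial (Fin n) R} {t : ℝ}

lemma sigmaNP_nonneg (f : MvPolynomial (Fin n) R) : 0 ≤ sigmaNP f :=
  inv_nonneg.2 (Real.sInf_nonneg fun _ hs => hs.1)

lemma sigmaNP_inv_le (ht : 0 ≤ t) (hd : (fun _ => t) ∈ newtonPolyhedron f) :
    (sigmaNP f)⁻¹ ≤ t := by
  rw [sigmaNP, inv_inv]
  exact csInf_le ⟨0, fun _ hs => hs.1⟩ ⟨ht, hd⟩

lemma diag_sigmaNP_inv_mem (ht : 0 ≤ t) (hd : (fun _ => t) ∈ newtonPolyhedron f) :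
    (fun _ => (sigmaNP f)⁻¹) ∈ newtonPolyhedron f := by
  have hclosed : IsClosed {s : ℝ | 0 ≤ s ∧ (fun _ => s) ∈ newtonPolyhedron f} :=
    isClosed_Ici.inter ((isClosed_newtonPolyhedron f).preimage (continuous_pi fun _ => continuous_id))
  rw [sigmaNP, inv_inv]
  exact (hclosed.csInf_mem ⟨t, ht, hd⟩ ⟨0, fun _ hs => hs.1⟩).2

lemma one_le_mul_of_diag_mem (hf0 : MvPolynomial.coeff 0 f = 0)
    (hd : (fun _ => t) ∈ newtonPolyhedron f) : 1 ≤ n * t := by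
  have hsupp (i) (hi : i ∈ f.support) : (1 : ℝ) ≤ ∑ j, 1 * ((i j : ℕ) : ℝ) := by
    simpa only [one_mul] using one_le_sum_exponent (by rintro rfl; exact (MvPolynomial.mem_support_iff.1 hi) hf0)
  simpa using le_sum_mul_of_mem_newtonPolyhedron (fun _ => zero_le_one) hsupp hd

lemma sigmaNP_inv_pos (hf0 : MvPolynomial.coeff 0 f = 0) (ht : 0 ≤ t)
    (hd : (fun _ => t) ∈ newtonPolyhedron f) : 0 < (sigmaNP f)⁻¹ :=
  pos_of_mul_pos_right (one_pos.trans_le (one_le_mul_of_diag_mem hf0 (diag_sigmaNP_inv_mem ht hd)))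
    n.cast_nonneg

end Sigma

section Face

variable {R : Type} [CommRing R] {n : ℕ} {f : MvPolynomial (Fin n) R}

lemma mem_support_faceRestrict {I : Set (Fin n → ℝ)} {i : Fin n →₀ ℕ} :
    i ∈ (faceRestrict f I).support ↔ i ∈ f.support ∧ (fun j => ((i j : ℕ) : ℝ)) ∈ I := by
  simp only [faceRestrict, MvPolynomial.mem_support_iff, MvPolynomial.coeff_sum,
    MvPolynomial.coeff_monomial, sum_ite_eq', mem_filter]
  split_ifs with hi <;> tauto

lemma NofK_eq_inf' (hS : f.support.Nonempty) (k : Fin n → ℕ) :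
    NofK f k = ((f.support.inf' hS fun i => ∑ j, k j * i j : ℕ) : ℝ) := by
  obtain ⟨i₀, hi₀, hmin⟩ := exists_mem_eq_inf' hS fun i => ∑ j, k j * i j
  refine IsLeast.csInf_eq ⟨⟨_, mem_newtonPolyhedron_of_mem_support hi₀, ?_⟩, ?_⟩
  · rw [hmin]; push_cast; rfl
  · rintro _ ⟨v, hv, rfl⟩
    refine le_sum_mul_of_mem_newtonPolyhedron (fun j => (k j).cast_nonneg) (fun i hi => ?_) hv
    exact_mod_cast inf'_le _ hi

lemma NofK_le_sum_mul {k : Fin n → ℕ} {i : Fin n →₀ ℕ} (hi : i ∈ f.support) :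
    NofK f k ≤ ∑ j, (k j : ℝ) * ((i j : ℕ) : ℝ) := by
  rw [NofK_eq_inf' ⟨i, hi⟩]
  exact_mod_cast inf'_le _ hi

lemma NofK_add_one_le_of_notMem_FofK {k : Fin n → ℕ} {i : Fin n →₀ ℕ} (hi : i ∈ f.support)
    (hiF : (fun j => ((i j : ℕ) : ℝ)) ∉ FofK f k) :
    NofK f k + 1 ≤ ∑ j, (k j : ℝ) * ((i j : ℕ) : ℝ) := by
  have hne : NofK f k ≠ ∑ j, (k j : ℝ) * ((i j : ℕ) : ℝ) := fun heq =>
    hiF ⟨mem_newtonPolyhedron_of_mem_support hi, heq.symm⟩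
  rw [NofK_eq_inf' ⟨i, hi⟩] at hne ⊢
  exact_mod_cast Nat.succ_le_of_lt (lt_of_le_of_ne (inf'_le _ hi) (by exact_mod_cast hne))

end Face

section Weights

variable {R : Type} [CommRing R] {n : ℕ} {f : MvPolynomial (Fin n) R}
  {w : (Fin n →₀ ℕ) → ℝ} {t : ℝ}

lemma NofK_add_one_sub_le_mul_nuSum (hw0 : ∀ i ∈ f.support, 0 ≤ w i)
    (hw1 : ∑ i ∈ f.support, w i = 1)
    (hwt : ∀ j, ∑ i ∈ f.support, w i * ((i j : ℕ) : ℝ) ≤ t) (k : Fin n → ℕ) :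
    NofK f k + 1 - ∑ i ∈ f.support with (fun j => ((i j : ℕ) : ℝ)) ∈ FofK f k, w i ≤
      t * nuSum k := by
  have hsplit := sum_filter_add_sum_filter_not f.support
    (fun i => (fun j => ((i j : ℕ) : ℝ)) ∈ FofK f k) w
  calc NofK f k + 1 - ∑ i ∈ f.support with (fun j => ((i j : ℕ) : ℝ)) ∈ FofK f k, w i
      = ∑ i ∈ f.support,
          w i * (NofK f k + if (fun j => ((i j : ℕ) : ℝ)) ∈ FofK f k then 0 else 1) := by
        simp only [mul_add, sum_add_distrib, ← sum_mul, hw1, mul_ite, mul_zero, mul_one,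
          sum_ite, sum_const_zero, zero_add]
        linarith
    _ ≤ ∑ i ∈ f.support, w i * ∑ j, (k j : ℝ) * ((i j : ℕ) : ℝ) := by
        refine sum_le_sum fun i hi => mul_le_mul_of_nonneg_left ?_ (hw0 i hi)
        split_ifs with hiF
        · simpa using NofK_le_sum_mul hi
        · exact NofK_add_one_le_of_notMem_FofK hi hiF
    _ = ∑ j, (k j : ℝ) * ∑ i ∈ f.support, w i * ((i j : ℕ) : ℝ) := by
        simp only [mul_sum]
        rw [sum_comm]
        exact sum_congr rfl fun _ _ => sum_congr rfl fun _ _ => by ring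
    _ ≤ ∑ j, (k j : ℝ) * t :=
        sum_le_sum fun j _ => mul_le_mul_of_nonneg_left (hwt j) (k j).cast_nonneg
    _ = t * nuSum k := by simp [nuSum, mul_sum, mul_comm]

lemma diag_div_mem_newtonPolyhedron_faceRestrict (hw0 : ∀ i ∈ f.support, 0 ≤ w i)
    (hwt : ∀ j, ∑ i ∈ f.support, w i * ((i j : ℕ) : ℝ) ≤ t) (I : Set (Fin n → ℝ))
    (hI : 0 < ∑ i ∈ f.support with (fun j => ((i j : ℕ) : ℝ)) ∈ I, w i) :
    (fun _ => t / ∑ i ∈ f.support with (fun j => ((i j : ℕ) : ℝ)) ∈ I, w i) ∈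
      newtonPolyhedron (faceRestrict f I) := by
  set s := f.support.filter fun i => (fun j => ((i j : ℕ) : ℝ)) ∈ I
  have hq : s.centerMass w (fun i j => ((i j : ℕ) : ℝ)) ∈ newtonPolyhedron (faceRestrict f I) :=
    ⟨_, s.centerMass_mem_convexHull (fun i hi => hw0 i (mem_filter.1 hi).1) hI
      fun i hi => ⟨i, mem_support_faceRestrict.2 (mem_filter.1 hi), rfl⟩,
      0, fun _ => le_rfl, add_zero _⟩
  refine mem_newtonPolyhedron_of_le hq fun j => ?_
  show _ ≤ t / _
  rw [centerMass, Pi.smul_apply, Finset.sum_apply, smul_eq_mul, le_div_iff₀ hI, mul_comm,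
    ← mul_assoc, mul_inv_cancel₀ hI.ne', one_mul]
  calc ∑ i ∈ s, (w i • fun j => ((i j : ℕ) : ℝ)) j = ∑ i ∈ s, w i * ((i j : ℕ) : ℝ) := rfl
    _ ≤ ∑ i ∈ f.support, w i * ((i j : ℕ) : ℝ) :=
        sum_le_sum_of_subset_of_nonneg (filter_subset _ _) fun i hi _ =>
          mul_nonneg (hw0 i hi) (Nat.cast_nonneg _)
    _ ≤ t := hwt j

lemma sum_filter_le_mul_sigmaNP_faceRestrict (hf0 : MvPolynomial.coeff 0 f = 0)
    (hw0 : ∀ i ∈ f.support, 0 ≤ w i)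
    (hwt : ∀ j, ∑ i ∈ f.support, w i * ((i j : ℕ) : ℝ) ≤ t) (ht : 0 ≤ t)
    (I : Set (Fin n → ℝ)) :
    ∑ i ∈ f.support with (fun j => ((i j : ℕ) : ℝ)) ∈ I, w i ≤
      t * sigmaNP (faceRestrict f I) := by
  set μ := ∑ i ∈ f.support with (fun j => ((i j : ℕ) : ℝ)) ∈ I, w i
  rcases (sum_nonneg fun i hi => hw0 i (mem_filter.1 hi).1 : 0 ≤ μ).eq_or_lt with hμ | hμ
  · exact hμ.symm.trans_le (mul_nonneg ht (sigmaNP_nonneg _))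
  have hd := diag_div_mem_newtonPolyhedron_faceRestrict hw0 hwt I hμ
  have hI0 : MvPolynomial.coeff 0 (faceRestrict f I) = 0 := by
    rw [← MvPolynomial.notMem_support_iff, mem_support_faceRestrict, MvPolynomial.mem_support_iff]
    tauto
  have hpos := sigmaNP_inv_pos hI0 (div_nonneg ht hμ.le) hd
  have hle := (le_div_iff₀ hμ).1 (sigmaNP_inv_le (div_nonneg ht hμ.le) hd)
  simpa only [div_inv_eq_mul] using (le_div_iff₀' hpos).2 hle

end Weights

theorem stmt4_general {n : ℕ} (h : MvPolynomial (Fin n) ℂ) (hh : h ≠ 0)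
    (hh0 : MvPolynomial.coeff 0 h = 0) (τ : Set (Fin n → ℝ)) :
    ∀ k : Fin n → ℕ, FofK h k = τ →
      sigmaNP h * (NofK h k + 1) - sigmaNP (faceRestrict h τ) ≤ (nuSum k : ℝ) := by
  rintro k rfl
  obtain ⟨i, hi⟩ := MvPolynomial.support_nonempty.2 hh
  have hdiag := diag_mem_newtonPolyhedron_of_mem_support hi
  have ht₀ : 0 < (sigmaNP h)⁻¹ := sigmaNP_inv_pos hh0 (by positivity) hdiag
  obtain ⟨w, hw0, hw1, hwt⟩ :=
    exists_weights_of_mem_newtonPolyhedron (diag_sigmaNP_inv_mem (by positivity) hdiag)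
  have hlow := NofK_add_one_sub_le_mul_nuSum hw0 hw1 hwt k
  have hface := sum_filter_le_mul_sigmaNP_faceRestrict hh0 hw0 hwt ht₀.le (FofK h k)
  rw [← inv_inv (sigmaNP h), sub_le_iff_le_add, inv_mul_le_iff₀ ht₀]
  linarith

/-- For any nonzero polynomial `h` over `ℂ` with `h(0) = 0` and any face `τ` of its
Newton polyhedron at the origin: for all `k ∈ ℕ^n` with `F(h)(k) = τ` one has
`ν(k) ≥ σ(h)(N(h)(k) + 1) - σ(h_τ)`. -/
theorem stmt4 {n : ℕ} (h : MvPolynomial (Fin n) ℂ) (hh : h ≠ 0)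
    (hh0 : MvPolynomial.coeff 0 h = 0) (τ : Set (Fin n → ℝ))
    (hτ : IsFaceOf (newtonPolyhedron h) τ) :
    ∀ k : Fin n → ℕ, FofK h k = τ →
      sigmaNP h * (NofK h k + 1) - sigmaNP (faceRestrict h τ) ≤ (nuSum k : ℝ) :=
  stmt4_general h hh hh0 τ

end
end

section
/- Let f be a nonzero polynomial over ℂ in the n variables x_1,…,x_n with f(0)=0, and let g(x_1,…,x_n,y) = f(x_1y, x_2,…,x_n), a nonzero polynomial in n+1 variables with g(0)=0. Then σ(f) = σ(g). -/
open scoped Classical Pointwise BigOperators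

noncomputable section

/-! The substitution `x₁ ↦ x₁ y` sends `x^i` to `x^i y^{i₁}`, so the exponents of `g` are the
images of those of `f` under the linear map `P v = (v, v₁)`, i.e. reindexing along `lastToZero`.
A reindexing of coordinates maps a Newton polyhedron into the Newton polyhedron of the reindexed
exponents and fixes the diagonal. Applying this to `P`, and to the projection forgetting the last
coordinate (a left inverse of `P`), shows that `(t, …, t)` lies in `Δ₀(f)` iff it lies in `Δ₀(g)`. -/

def lastToZero {n : ℕ} : Fin (n + 2) → Fin (n + 1) :=
  Fin.snoc (α := fun _ => Fin (n + 1)) id 0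

@[simp]
lemma lastToZero_castSucc {n : ℕ} (k : Fin (n + 1)) : lastToZero k.castSucc = k := by
  simp [lastToZero]

@[simp]
lemma lastToZero_last {n : ℕ} : lastToZero (Fin.last (n + 1)) = 0 := by
  simp [lastToZero]

namespace MvPolynomial

variable {R : Type*} [CommSemiring R] {n : ℕ}

def firstToLastExponent : (Fin (n + 1) →₀ ℕ) →+ (Fin (n + 2) →₀ ℕ) :=
  Finsupp.mapDomain.addMonoidHom Fin.castSucc +
    (Finsupp.singleAddHom (Fin.last (n + 1))).comp (Finsupp.applyAddHom 0)

lemma firstToLastExponent_apply (i : Fin (n + 1) →₀ ℕ) (k : Fin (n + 2)) :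
    firstToLastExponent i k = i (lastToZero k) := by
  induction k using Fin.lastCases with
  | last => simp [firstToLastExponent, Finsupp.mapDomain_of_notMem_range]
  | cast k =>
    simp [firstToLastExponent, Finsupp.mapDomain_apply (Fin.castSucc_injective _),
      (Fin.castSucc_lt_last k).ne]

lemma firstToLastExponent_injective :
    Function.Injective (firstToLastExponent (n := n)) := fun i i' h =>
  Finsupp.ext fun k => by
    simpa [firstToLastExponent_apply] using DFunLike.congr_fun h k.castSucc

/-- `f ↦ f(x₁ y, x₂, …, xₙ)`, where `y` is the new last variable. -/
def mulFirstByLast : MvPolynomial (Fin (n + 1)) R →ₐ[R] MvPolynomial (Fin (n + 2)) R :=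
  AddMonoidAlgebra.mapDomainAlgHom R R firstToLastExponent

lemma mulFirstByLast_monomial (s : Fin (n + 1) →₀ ℕ) (a : R) :
    mulFirstByLast (monomial s a) = monomial (firstToLastExponent s) a := by
  simp [mulFirstByLast, monomial]

lemma aeval_eq_mulFirstByLast :
    aeval (fun i : Fin (n + 1) =>
        if i = 0 then X 0 * X (Fin.last (n + 1)) else (X i.castSucc : MvPolynomial _ R)) =
      mulFirstByLast := by
  refine algHom_ext fun j => ?_
  rw [aeval_X, show (X j : MvPolynomial _ R) = monomial (Finsupp.single j 1) 1 from rfl,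
    mulFirstByLast_monomial]
  by_cases hj : j = 0
  · subst hj
    simp [firstToLastExponent, X, monomial_mul]
  · simp [firstToLastExponent, X, hj]

lemma support_mulFirstByLast (f : MvPolynomial (Fin (n + 1)) R) :
    (mulFirstByLast f).support = f.support.image firstToLastExponent :=
  Finsupp.mapDomain_support_of_injective firstToLastExponent_injective _

lemma exponents_mulFirstByLast (f : MvPolynomial (Fin (n + 1)) R) :
    {v : Fin (n + 2) → ℝ | ∃ i ∈ (mulFirstByLast f).support, v = fun j => ((i j : ℕ) : ℝ)} =
      LinearMap.funLeft ℝ ℝ lastToZero ''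
        {v | ∃ i ∈ f.support, v = fun j => ((i j : ℕ) : ℝ)} := by
  have hcast (i : Fin (n + 1) →₀ ℕ) : (fun j => ((firstToLastExponent i j : ℕ) : ℝ)) =
      LinearMap.funLeft ℝ ℝ lastToZero (fun j => ((i j : ℕ) : ℝ)) := by
    ext k
    simp [LinearMap.funLeft, firstToLastExponent_apply]
  ext v
  simp [support_mulFirstByLast, hcast, eq_comm]

end MvPolynomial

lemma image_funLeft_convexHull_add_nonneg_subset {ι κ : Type*} (σ : κ → ι) (S : Set (ι → ℝ)) :
    LinearMap.funLeft ℝ ℝ σ '' (convexHull ℝ S + {v | ∀ j, 0 ≤ v j}) ⊆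
      convexHull ℝ (LinearMap.funLeft ℝ ℝ σ '' S) + {v | ∀ j, 0 ≤ v j} := by
  rw [Set.image_add, LinearMap.image_convexHull]
  exact Set.add_subset_add_left (Set.image_subset_iff.2 fun v hv j => hv (σ j))

open MvPolynomial in
lemma diag_mem_newtonPolyhedron_mulFirstByLast_iff {R : Type} [CommRing R] {n : ℕ}
    (f : MvPolynomial (Fin (n + 1)) R) (t : ℝ) :
    (fun _ => t) ∈ newtonPolyhedron (mulFirstByLast f) ↔ (fun _ => t) ∈ newtonPolyhedron f := by
  rw [newtonPolyhedron, newtonPolyhedron, exponents_mulFirstByLast]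
  constructor
  · intro h
    have hproj := image_funLeft_convexHull_add_nonneg_subset Fin.castSucc _ ⟨_, h, rfl⟩
    have hretract : ∀ v : Fin (n + 1) → ℝ,
        LinearMap.funLeft ℝ ℝ Fin.castSucc (LinearMap.funLeft ℝ ℝ lastToZero v) = v :=
      fun v => funext fun k => by simp [LinearMap.funLeft]
    simp only [Set.image_image, hretract, Set.image_id'] at hproj
    exact hproj
  · exact fun h => image_funLeft_convexHull_add_nonneg_subset _ _ ⟨_, h, rfl⟩

theorem stmt9_general {n : ℕ} (f : MvPolynomial (Fin (n + 1)) ℂ)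
    (g : MvPolynomial (Fin (n + 2)) ℂ)
    (hg : g = MvPolynomial.aeval
      (fun i : Fin (n + 1) =>
        if i = 0 then MvPolynomial.X 0 * MvPolynomial.X (Fin.last (n + 1))
        else MvPolynomial.X i.castSucc) f) :
    sigmaNP f = sigmaNP g := by
  rw [MvPolynomial.aeval_eq_mulFirstByLast] at hg
  subst hg
  simp only [sigmaNP, diag_mem_newtonPolyhedron_mulFirstByLast_iff]

/-- If `g(x₁,…,xₙ,y) = f(x₁y, x₂,…,xₙ)` for a nonzero polynomial `f` over `ℂ` with
`f(0) = 0`, then `σ(f) = σ(g)`. -/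
theorem stmt9 {n : ℕ} (f : MvPolynomial (Fin (n + 1)) ℂ) (hf : f ≠ 0)
    (hf0 : MvPolynomial.coeff 0 f = 0)
    (g : MvPolynomial (Fin (n + 2)) ℂ)
    (hg : g = MvPolynomial.aeval
      (fun i : Fin (n + 1) =>
        if i = 0 then MvPolynomial.X 0 * MvPolynomial.X (Fin.last (n + 1))
        else MvPolynomial.X i.castSucc) f) :
    sigmaNP f = sigmaNP g :=
  stmt9_general f g hg

end
end

section
/- Let f be a nonzero polynomial over ℂ in the n variables x_1,…,x_n with f(0)=0, and let g(x_1,…,x_n,y) = f(x_1y, x_2,…,x_n), a polynomial in n+1 variables. If f is nondegenerate with respect to Δ_0(f), then g is nondegenerate with respect to Δ_0(g). -/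
open scoped Classical Pointwise BigOperators

noncomputable section

/-!
The substitution `x₁ ↦ x₁ y` sends the monomial `xⁱ` to `xⁱ y^{i₁}`, so on exponents it is the
injective linear map `L v = (v, v₁)`. Hence `L⁻¹ Δ₀(g) = Δ₀(f)`, and a compact face `τ` of `Δ₀(g)`
pulls back to a compact face `L⁻¹ τ` of `Δ₀(f)`; it is nonempty because every face of a Newton
polyhedron contains an exponent. Moreover `g_τ(x, y) = f_{L⁻¹ τ}(x₁ y, x₂, …, xₙ)`, and by the
chain rule a critical point `(x, y)` of `g_τ` on the torus yields the critical point
`(x₁ y, x₂, …, xₙ)` of `f_{L⁻¹ τ}` on the torus.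
-/

open MvPolynomial

namespace MvPolynomial

theorem pderiv_aeval {σ τ R : Type*} [CommSemiring R] [Fintype σ] (φ : σ → MvPolynomial τ R)
    (k : τ) (p : MvPolynomial σ R) :
    pderiv k (aeval φ p) = ∑ l, aeval φ (pderiv l p) * pderiv k (φ l) := by
  induction p using MvPolynomial.induction_on with
  | C a => simp
  | add p q hp hq => simp only [map_add, hp, hq, add_mul, Finset.sum_add_distrib]
  | mul_X p l hp =>
    simp only [map_mul, aeval_X, Derivation.leibniz, smul_eq_mul, hp, pderiv_X, Pi.single_apply,
      mul_one, mul_zero, map_add, apply_ite, map_zero, add_mul, ite_mul, zero_mul,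
      Finset.sum_add_distrib, Finset.sum_ite_eq, Finset.mem_univ, if_true, Finset.mul_sum,
      mul_assoc]

theorem eval_aeval {σ τ R : Type*} [CommSemiring R] (φ : σ → MvPolynomial τ R) (x : τ → R)
    (q : MvPolynomial σ R) : eval x (aeval φ q) = eval (fun l => eval x (φ l)) q := by
  rw [aeval_eq_bind₁]
  exact eval₂Hom_bind₁ (RingHom.id R) x φ q

end MvPolynomial

theorem exists_sum_mul_comp {m n : ℕ} (L : (Fin m → ℝ) →ₗ[ℝ] (Fin n → ℝ)) (b : Fin n → ℝ) :
    ∃ b' : Fin m → ℝ, ∀ x, ∑ j, b j * L x j = ∑ i, b' i * x i := by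
  refine ⟨fun i => ∑ j, b j * L (Pi.single i 1) j, fun x => ?_⟩
  conv_lhs => rw [L.pi_apply_eq_sum_univ x]
  simp only [Finset.sum_apply, Pi.smul_apply, smul_eq_mul, Finset.mul_sum, Finset.sum_mul]
  rw [Finset.sum_comm]
  refine Finset.sum_congr rfl fun i _ => Finset.sum_congr rfl fun j _ => ?_
  have hsingle : (fun k => if i = k then (1 : ℝ) else 0) = Pi.single i 1 := by
    ext k
    simp [Pi.single_apply, eq_comm]
  rw [hsingle]
  ring

theorem IsFaceOf.preimage {m n : ℕ} {Δ τ : Set (Fin n → ℝ)} (hτ : IsFaceOf Δ τ)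
    (L : (Fin m → ℝ) →ₗ[ℝ] (Fin n → ℝ)) (hne : (L ⁻¹' τ).Nonempty) :
    IsFaceOf (L ⁻¹' Δ) (L ⁻¹' τ) := by
  rcases hτ with rfl | ⟨-, b0, b, hL, rfl⟩
  · exact Or.inl rfl
  obtain ⟨b', hb'⟩ := exists_sum_mul_comp L b
  refine Or.inr ⟨hne, b0, b', fun x hx => hb' x ▸ hL _ hx, ?_⟩
  ext x
  simp [hb']

theorem sum_mul_add {n : ℕ} (b x y : Fin n → ℝ) :
    ∑ j, b j * (x + y) j = ∑ j, b j * x j + ∑ j, b j * y j := by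
  simp [mul_add, Finset.sum_add_distrib]

section NewtonPolyhedron

variable {R : Type} [CommRing R] {n : ℕ}

def expVec (i : Fin n →₀ ℕ) : Fin n → ℝ := fun j => (i j : ℝ)

theorem newtonPolyhedron_eq (f : MvPolynomial (Fin n) R) :
    newtonPolyhedron f = convexHull ℝ (expVec '' f.support) + {v | ∀ j, 0 ≤ v j} := by
  rw [newtonPolyhedron]
  congr 3
  ext v
  exact ⟨fun ⟨i, hi, h⟩ => ⟨i, hi, h.symm⟩, fun ⟨i, hi, h⟩ => ⟨i, hi, h.symm⟩⟩

theorem expVec_mem_newtonPolyhedron {f : MvPolynomial (Fin n) R} {i : Fin n →₀ ℕ}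
    (hi : i ∈ f.support) : expVec i ∈ newtonPolyhedron f := by
  rw [newtonPolyhedron_eq]
  simpa using Set.add_mem_add (subset_convexHull ℝ _ (Set.mem_image_of_mem expVec hi))
    (show (0 : Fin n → ℝ) ∈ {v : Fin n → ℝ | ∀ j, 0 ≤ v j} from fun _ => le_rfl)

theorem add_mem_newtonPolyhedron {f : MvPolynomial (Fin n) R} {x r : Fin n → ℝ}
    (hx : x ∈ newtonPolyhedron f) (hr : ∀ j, 0 ≤ r j) : x + r ∈ newtonPolyhedron f := by
  obtain ⟨c, hc, s, hs, rfl⟩ := hx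
  exact ⟨c, hc, s + r, fun j => add_nonneg (hs j) (hr j), (add_assoc c s r).symm⟩

/-- Otherwise the affine function would become negative far out on a ray `x + t • r`, `t ≥ 0`,
which stays in the polyhedron. -/
theorem sum_mul_nonneg_of_nonneg_on_newtonPolyhedron {f : MvPolynomial (Fin n) R} {b0 : ℝ}
    {b : Fin n → ℝ} (hΔ : (newtonPolyhedron f).Nonempty)
    (hL : ∀ x ∈ newtonPolyhedron f, 0 ≤ b0 + ∑ j, b j * x j) {r : Fin n → ℝ}
    (hr : ∀ j, 0 ≤ r j) : 0 ≤ ∑ j, b j * r j := by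
  obtain ⟨q, hq⟩ := hΔ
  set B := ∑ j, b j * r j
  by_contra! hneg
  set t := (b0 + ∑ j, b j * q j + 1) / -B
  have ht : 0 ≤ t := div_nonneg (by linarith [hL q hq]) (by linarith)
  have hmem := add_mem_newtonPolyhedron hq (r := t • r) fun j => mul_nonneg ht (hr j)
  have hval : b0 + ∑ j, b j * (q + t • r) j = -1 := by
    have htB : t * B = -(b0 + ∑ j, b j * q j + 1) := by
      simp only [t]
      field_simp [hneg.ne]
    simp only [sum_mul_add, Pi.smul_apply, smul_eq_mul, mul_left_comm _ t, ← Finset.mul_sum]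
    linarith
  linarith [hL _ hmem]

/-- The supporting affine function vanishes at a point `c + r` of the face, hence at `c`, and its
minimum over the convex hull of the exponents is attained at an exponent. -/
theorem IsFaceOf.exists_expVec_mem {f : MvPolynomial (Fin n) R} (hf : f ≠ 0)
    {τ : Set (Fin n → ℝ)} (hτ : IsFaceOf (newtonPolyhedron f) τ) :
    ∃ i ∈ f.support, expVec i ∈ τ := by
  obtain ⟨i₀, hi₀⟩ := MvPolynomial.support_nonempty.mpr hf
  rcases hτ with rfl | ⟨⟨q, hq⟩, b0, b, hL, rfl⟩
  · exact ⟨i₀, hi₀, expVec_mem_newtonPolyhedron hi₀⟩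
  obtain ⟨hqΔ, hq0⟩ := hq
  have hqΔ' := hqΔ
  rw [newtonPolyhedron_eq] at hqΔ'
  obtain ⟨c, hc, r, hr, rfl⟩ := hqΔ'
  have hconc : ConcaveOn ℝ Set.univ fun x : Fin n → ℝ => b0 + ∑ j, b j * x j := by
    refine (((∑ j, b j • LinearMap.proj j : (Fin n → ℝ) →ₗ[ℝ] ℝ).concaveOn convex_univ).add_const
      b0).congr fun x _ => ?_
    simp [add_comm b0]
  obtain ⟨_, ⟨i, hi, rfl⟩, hle⟩ := hconc.exists_le_of_mem_convexHull (Set.subset_univ _) hc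
  have hr0 := sum_mul_nonneg_of_nonneg_on_newtonPolyhedron ⟨_, hqΔ⟩ hL hr
  rw [sum_mul_add] at hq0
  have hi0 := hL _ (expVec_mem_newtonPolyhedron hi)
  exact ⟨i, hi, expVec_mem_newtonPolyhedron hi, by linarith⟩

end NewtonPolyhedron

section HeadSubst

variable {n : ℕ}

/-- The substitution `x₁ ↦ x₁ y` of the theorem, `y` being the last variable. On exponents it acts
by `snocHeadExp`, and on their real embeddings by the linear map `snocHead`. -/
def headSubst (R : Type) [CommSemiring R] : Fin (n + 1) → MvPolynomial (Fin (n + 2)) R :=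
  fun i => if i = 0 then X 0 * X (Fin.last (n + 1)) else X i.castSucc

def snocHeadExp (i : Fin (n + 1) →₀ ℕ) : Fin (n + 2) →₀ ℕ :=
  Finsupp.equivFunOnFinite.symm (Fin.snoc i (i 0))

@[simp] theorem snocHeadExp_castSucc (i : Fin (n + 1) →₀ ℕ) (j : Fin (n + 1)) :
    snocHeadExp i j.castSucc = i j := by
  simp [snocHeadExp]

@[simp] theorem snocHeadExp_last (i : Fin (n + 1) →₀ ℕ) :
    snocHeadExp i (Fin.last (n + 1)) = i 0 := by
  simp [snocHeadExp]

theorem snocHeadExp_injective : Function.Injective (snocHeadExp (n := n)) := fun a b h =>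
  Finsupp.ext fun j => by rw [← snocHeadExp_castSucc a j, ← snocHeadExp_castSucc b j, h]

def snocHead : (Fin (n + 1) → ℝ) →ₗ[ℝ] (Fin (n + 2) → ℝ) where
  toFun x := Fin.snoc x (x 0)
  map_add' x y := funext fun k => Fin.lastCases (by simp) (by simp) k
  map_smul' c x := funext fun k => Fin.lastCases (by simp) (by simp) k

@[simp] theorem snocHead_castSucc (x : Fin (n + 1) → ℝ) (j : Fin (n + 1)) :
    snocHead x j.castSucc = x j := by
  simp [snocHead]

@[simp] theorem snocHead_last (x : Fin (n + 1) → ℝ) : snocHead x (Fin.last (n + 1)) = x 0 := by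
  simp [snocHead]

theorem snocHead_injective : Function.Injective (snocHead (n := n)) := fun x y h =>
  funext fun j => by rw [← snocHead_castSucc x j, ← snocHead_castSucc y j, h]

theorem expVec_snocHeadExp (i : Fin (n + 1) →₀ ℕ) :
    expVec (snocHeadExp i) = snocHead (expVec i) :=
  funext fun k => Fin.lastCases (by simp [expVec]) (fun j => by simp [expVec]) k

variable {R : Type} [CommRing R]

theorem aeval_headSubst_monomial (i : Fin (n + 1) →₀ ℕ) (c : R) :
    aeval (headSubst R) (monomial i c) = monomial (snocHeadExp i) c := by
  rw [aeval_monomial, monomial_eq, Finsupp.prod_fintype _ _ fun _ => pow_zero _,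
    Finsupp.prod_fintype _ _ fun _ => pow_zero _,
    Fin.prod_univ_castSucc (f := fun k => (X k : MvPolynomial (Fin (n + 2)) R) ^ snocHeadExp i k),
    Fin.prod_univ_succ (f := fun j => headSubst R j ^ i j)]
  simp only [snocHeadExp_castSucc, snocHeadExp_last]
  rw [Fin.prod_univ_succ (f := fun j => (X j.castSucc : MvPolynomial (Fin (n + 2)) R) ^ i j)]
  simp [headSubst, Fin.succ_ne_zero, mul_pow, algebraMap_eq]
  ring

theorem coeff_aeval_headSubst (f : MvPolynomial (Fin (n + 1)) R) (m : Fin (n + 2) →₀ ℕ) :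
    coeff m (aeval (headSubst R) f) =
      ∑ i ∈ f.support, if snocHeadExp i = m then coeff i f else 0 := by
  conv_lhs => rw [f.as_sum]
  simp only [map_sum, aeval_headSubst_monomial, coeff_sum, coeff_monomial]

@[simp] theorem coeff_snocHeadExp_aeval_headSubst (f : MvPolynomial (Fin (n + 1)) R)
    (i : Fin (n + 1) →₀ ℕ) : coeff (snocHeadExp i) (aeval (headSubst R) f) = coeff i f := by
  simp only [coeff_aeval_headSubst, snocHeadExp_injective.eq_iff]
  rw [Finset.sum_ite_eq']
  split_ifs with hi
  · rfl
  · exact (notMem_support_iff.mp hi).symm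

theorem support_aeval_headSubst (f : MvPolynomial (Fin (n + 1)) R) :
    (aeval (headSubst R) f).support = f.support.image snocHeadExp := by
  ext m
  simp only [Finset.mem_image, mem_support_iff]
  constructor
  · intro hm
    by_contra! hne
    refine hm ((coeff_aeval_headSubst f m).trans (Finset.sum_eq_zero fun i hi => ?_))
    exact if_neg (hne i (mem_support_iff.mp hi))
  · rintro ⟨i, hi, rfl⟩
    rwa [coeff_snocHeadExp_aeval_headSubst]

theorem preimage_newtonPolyhedron_aeval_headSubst (f : MvPolynomial (Fin (n + 1)) R) :
    snocHead ⁻¹' newtonPolyhedron (aeval (headSubst R) f) = newtonPolyhedron f := by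
  have hexp : expVec '' ((aeval (headSubst R) f).support : Set (Fin (n + 2) →₀ ℕ)) =
      snocHead '' (expVec '' (f.support : Set (Fin (n + 1) →₀ ℕ))) := by
    rw [support_aeval_headSubst, Finset.coe_image, Set.image_image, Set.image_image]
    simp only [expVec_snocHeadExp]
  ext x
  rw [Set.mem_preimage, newtonPolyhedron_eq, newtonPolyhedron_eq, hexp,
    ← LinearMap.image_convexHull]
  constructor
  · rintro ⟨_, ⟨c, hc, rfl⟩, r, hr, hx⟩
    refine ⟨c, hc, fun j => r j.castSucc, fun j => hr _, funext fun j => ?_⟩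
    simpa using congrFun hx j.castSucc
  · rintro ⟨c, hc, r, hr, rfl⟩
    exact ⟨snocHead c, Set.mem_image_of_mem _ hc, snocHead r,
      fun k => Fin.lastCases (by simpa using hr 0) (fun j => by simpa using hr j) k,
      (map_add _ _ _).symm⟩

theorem faceRestrict_aeval_headSubst (f : MvPolynomial (Fin (n + 1)) R)
    (I : Set (Fin (n + 2) → ℝ)) :
    faceRestrict (aeval (headSubst R) f) I =
      aeval (headSubst R) (faceRestrict f (snocHead ⁻¹' I)) := by
  rw [faceRestrict, faceRestrict, support_aeval_headSubst, Finset.filter_image,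
    Finset.sum_image snocHeadExp_injective.injOn, map_sum]
  refine Finset.sum_congr (Finset.filter_congr fun i _ => ?_) fun i _ => ?_
  · exact iff_of_eq (congrArg (· ∈ I) (expVec_snocHeadExp i))
  · rw [aeval_headSubst_monomial, coeff_snocHeadExp_aeval_headSubst]

theorem pderiv_castSucc_headSubst_of_ne {j l : Fin (n + 1)} (h : l ≠ j) :
    pderiv j.castSucc (headSubst R l) = 0 := by
  by_cases hl : l = 0
  · subst hl
    have hj : j.castSucc ≠ 0 := by simpa using h.symm
    simp [headSubst, pderiv_X_of_ne hj.symm, pderiv_X_of_ne (Fin.castSucc_ne_last j).symm]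
  · simp [headSubst, hl, pderiv_X_of_ne ((Fin.castSucc_injective _).ne h)]

theorem eval_pderiv_castSucc_headSubst_ne_zero {x : Fin (n + 2) → ℂ} (hx : ∀ k, x k ≠ 0)
    (j : Fin (n + 1)) : eval x (pderiv j.castSucc (headSubst ℂ j)) ≠ 0 := by
  by_cases hj : j = 0
  · subst hj
    simp [headSubst, hx]
  · simp [headSubst, hj]

/-- By the chain rule, `∂(p ∘ φ)/∂xⱼ` is `(∂p/∂xⱼ) ∘ φ` times `y` for `j = 1` and times `1`
otherwise. -/
theorem NoCritOnTorus.aeval_headSubst {p : MvPolynomial (Fin (n + 1)) ℂ}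
    (hp : NoCritOnTorus p) : NoCritOnTorus (aeval (headSubst ℂ) p) := by
  rintro ⟨x, hx, hcrit⟩
  refine hp ⟨fun l => eval x (headSubst ℂ l), fun l => ?_, fun j => ?_⟩
  · by_cases hl : l = 0 <;> simp [headSubst, hl, hx]
  · have h := hcrit j.castSucc
    rw [pderiv_aeval, map_sum, Finset.sum_eq_single j
      (fun l _ hl => by rw [pderiv_castSucc_headSubst_of_ne hl, mul_zero, map_zero])
      (by simp), map_mul, eval_aeval] at h
    exact (mul_eq_zero.mp h).resolve_right (eval_pderiv_castSucc_headSubst_ne_zero hx j)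

end HeadSubst

theorem stmt10_general {n : ℕ} (f : MvPolynomial (Fin (n + 1)) ℂ) (hf : f ≠ 0)
    (g : MvPolynomial (Fin (n + 2)) ℂ)
    (hg : g = MvPolynomial.aeval
      (fun i : Fin (n + 1) =>
        if i = 0 then MvPolynomial.X 0 * MvPolynomial.X (Fin.last (n + 1))
        else MvPolynomial.X i.castSucc) f)
    (hnd : NondegenerateC f) :
    NondegenerateC g := by
  obtain rfl : g = aeval (headSubst ℂ) f := hg
  intro τ hτ hτc
  have hg0 : aeval (headSubst ℂ) f ≠ 0 := by
    rw [← support_nonempty, support_aeval_headSubst, Finset.image_nonempty, support_nonempty]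
    exact hf
  obtain ⟨m, hm, hmτ⟩ := hτ.exists_expVec_mem hg0
  rw [support_aeval_headSubst] at hm
  obtain ⟨i, -, rfl⟩ := Finset.mem_image.mp hm
  have hface := hτ.preimage snocHead ⟨expVec i, show snocHead _ ∈ τ by rwa [← expVec_snocHeadExp]⟩
  rw [preimage_newtonPolyhedron_aeval_headSubst] at hface
  have hcomp : IsCompact (snocHead ⁻¹' τ) :=
    (LinearMap.isClosedEmbedding_of_injective (LinearMap.ker_eq_bot.mpr snocHead_injective)
      ).isCompact_preimage hτc
  rw [faceRestrict_aeval_headSubst]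
  exact (hnd _ hface hcomp).aeval_headSubst

/-- If `g(x₁,…,xₙ,y) = f(x₁y, x₂,…,xₙ)` and `f` is nondegenerate with respect to its
Newton polyhedron at the origin, then so is `g`. -/
theorem stmt10 {n : ℕ} (f : MvPolynomial (Fin (n + 1)) ℂ) (hf : f ≠ 0)
    (hf0 : MvPolynomial.coeff 0 f = 0)
    (g : MvPolynomial (Fin (n + 2)) ℂ)
    (hg : g = MvPolynomial.aeval
      (fun i : Fin (n + 1) =>
        if i = 0 then MvPolynomial.X 0 * MvPolynomial.X (Fin.last (n + 1))
        else MvPolynomial.X i.castSucc) f)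
    (hnd : NondegenerateC f) :
    NondegenerateC g :=
  stmt10_general f hf g hg hnd

end
end
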